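/- Let H be a real Hilbert space and Γ ⊆ H totally bounded and linearly independent. Suppose (g_n)_{n∈ℕ} is a sequence in Γ chosen by the geometric greedy algorithm, i.e. with Λ_n := {g_1,…,g_n}, for every n the element g_{n+1} ∈ Γ satisfies min_{μ∈Λ_n} ‖g_{n+1} − μ‖ = sup_{g∈Γ} min_{μ∈Λ_n} ‖g − μ‖ = h_{Λ_n,Γ}. Then h_{Λ_n,Γ} → 0 as n → ∞, and ‖f − I_{Λ_n}(f)‖ → 0 as n → ∞ for every f in the closed linear span H_Γ of Γ. -/

import Mathlib

/-!
Under the greedy rule the fill distance `h_n` is attained at the new point, `h_n = d(g_n, Λ_n)`,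
so `h_n ≤ ‖g_n - g_m‖` for every `m < n`. By total boundedness two of the `g`'s are arbitrarily
close, and `h_n` is antitone, hence `h_n → 0`.

The error maps `f ↦ f - I_{Λ_n} f` are orthogonal projections, hence `1`-Lipschitz, and they tend
to zero on `Γ` since `‖γ - I_{Λ_n} γ‖ ≤ d(γ, Λ_n) ≤ h_n`. The points where an equicontinuous
family of linear maps tends to zero form a closed subspace, which therefore contains `H_Γ`.
-/

open Filter
open scoped RealInnerProductSpace ENNReal Topology

/-- Generalized interpolation operator: orthogonal projection onto the span of `Λ`. -/
noncomputable def interp {H : Type*} [NormedAddCommGroup H] [InnerProductSpace ℝ H]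
    (Λ : Finset H) (f : H) : H :=
  haveI : FiniteDimensional ℝ (Submodule.span ℝ (Λ : Set H)) :=
    FiniteDimensional.span_of_finite ℝ Λ.finite_toSet
  (Submodule.orthogonalProjectionOnto (Submodule.span ℝ (Λ : Set H)) f : H)

/-- Generalized power function: distance from `g` to the span of `Λ`. -/
noncomputable def powerFn {H : Type*} [NormedAddCommGroup H] [InnerProductSpace ℝ H]
    (Λ : Finset H) (g : H) : ℝ := ‖g - interp Λ g‖


/-- Fill distance of `Λ` in `Γ`: the supremum over `g ∈ Γ` of the distance from `g` to `Λ`. -/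
noncomputable def fillDist {M : Type*} [PseudoEMetricSpace M] (Λ Γ : Set M) : ℝ≥0∞ :=
  ⨆ g ∈ Γ, EMetric.infEdist g Λ

open Metric Set

section FillDistance

variable {M : Type*} [PseudoEMetricSpace M]

theorem TotallyBounded.exists_lt_edist_lt {s : Set M} (hs : TotallyBounded s) {u : ℕ → M}
    (hu : ∀ n, u n ∈ s) {ε : ℝ≥0∞} (hε : 0 < ε) : ∃ m n, m < n ∧ edist (u m) (u n) < ε := by
  obtain ⟨t, htf, hcover⟩ := EMetric.totallyBounded_iff.1 hs (ε / 2) (ENNReal.half_pos hε.ne')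
  have hcenter : ∀ n, ∃ c ∈ t, edist (u n) c < ε / 2 := fun n => by simpa using hcover (hu n)
  choose c hct hc using hcenter
  have : Finite t := htf
  obtain ⟨m, n, hne, hsame⟩ := Finite.exists_ne_map_eq_of_infinite fun n => (⟨c n, hct n⟩ : t)
  have hclose : edist (u m) (u n) < ε := calc
    edist (u m) (u n) ≤ edist (u m) (c m) + edist (u n) (c n) := by
      rw [edist_comm (u n), show c m = c n from congrArg Subtype.val hsame]
      exact edist_triangle _ _ _
    _ < ε / 2 + ε / 2 := ENNReal.add_lt_add (hc m) (hc n)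
    _ = ε := ENNReal.add_halves ε
  rcases hne.lt_or_gt with h | h
  · exact ⟨m, n, h, hclose⟩
  · exact ⟨n, m, h, by rwa [edist_comm]⟩

theorem infEDist_le_fillDist {Λ Γ : Set M} {x : M} (hx : x ∈ Γ) :
    infEDist x Λ ≤ fillDist Λ Γ :=
  le_iSup₂ (f := fun y _ => infEDist y Λ) x hx

theorem fillDist_anti {Λ Λ' : Set M} (Γ : Set M) (h : Λ ⊆ Λ') : fillDist Λ' Γ ≤ fillDist Λ Γ :=
  iSup₂_mono fun _ _ => infEDist_anti h

theorem fillDist_eq_infEDist {Λ Γ : Set M} {x : M} (hx : x ∈ Γ)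
    (hmax : ∀ y ∈ Γ, infEDist y Λ ≤ infEDist x Λ) : fillDist Λ Γ = infEDist x Λ :=
  le_antisymm (iSup₂_le hmax) (infEDist_le_fillDist hx)

theorem tendsto_fillDist_of_greedy {Γ : Set M} (hΓ : TotallyBounded Γ) {g : ℕ → M}
    (hmem : ∀ n, g n ∈ Γ)
    (hgreedy : ∀ n, ∀ γ ∈ Γ, infEDist γ (g '' Iio n) ≤ infEDist (g n) (g '' Iio n)) :
    Tendsto (fun n => fillDist (g '' Iio n) Γ) atTop (𝓝 0) := by
  refine ENNReal.tendsto_nhds_zero.2 fun ε hε => ?_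
  obtain ⟨m, n, hmn, hclose⟩ := hΓ.exists_lt_edist_lt hmem hε
  refine eventually_atTop.2 ⟨n, fun k hk => ?_⟩
  calc fillDist (g '' Iio k) Γ ≤ fillDist (g '' Iio n) Γ :=
        fillDist_anti Γ (image_mono (Iio_subset_Iio hk))
    _ = infEDist (g n) (g '' Iio n) := fillDist_eq_infEDist (hmem n) (hgreedy n)
    _ ≤ edist (g n) (g m) := infEDist_le_edist_of_mem (mem_image_of_mem g hmn)
    _ ≤ ε := by rw [edist_comm]; exact hclose.le

end FillDistance

theorem Equicontinuous.tendsto_zero_of_mem_closure_span {ι R E F : Type*} [Semiring R]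
    [AddCommMonoid E] [Module R E] [TopologicalSpace E] [AddCommMonoid F] [Module R F]
    [UniformSpace F] [ContinuousAdd F] [ContinuousConstSMul R F] {l : Filter ι}
    {T : ι → E →ₗ[R] F} (hT : Equicontinuous fun i => ⇑(T i)) {Γ : Set E}
    (hΓ : ∀ γ ∈ Γ, Tendsto (fun i => T i γ) l (𝓝 0)) :
    ∀ f ∈ closure (Submodule.span R Γ : Set E), Tendsto (fun i => T i f) l (𝓝 0) := by
  let S : Submodule R E :=
    { carrier := {f | Tendsto (fun i => T i f) l (𝓝 0)}
      add_mem' := fun hf hf' => by simpa using hf.add hf'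
      zero_mem' := by simpa using tendsto_const_nhds
      smul_mem' := fun c f hf => by simpa using hf.const_smul c }
  have hS : IsClosed (S : Set E) := hT.isClosed_setOfPred_tendsto continuous_const
  exact closure_minimal ((Submodule.span_le (p := S)).2 hΓ) hS

section Interpolation

variable {H : Type*} [NormedAddCommGroup H] [InnerProductSpace ℝ H]

theorem sub_interp_eq_starProjection_orthogonal (Λ : Finset H) (f : H) :
    f - interp Λ f = (Submodule.span ℝ (Λ : Set H))ᗮ.starProjection f :=
  (Submodule.starProjection_orthogonal_val f).symm

theorem edist_interp_le_infEDist (Λ : Finset H) (f : H) :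
    edist f (interp Λ f) ≤ infEDist f Λ := by
  refine le_infEDist.2 fun μ hμ => ?_
  rw [edist_dist, edist_dist, dist_eq_norm, dist_eq_norm]
  refine ENNReal.ofReal_le_ofReal ?_
  change ‖f - (Submodule.span ℝ (Λ : Set H)).starProjection f‖ ≤ _
  rw [Submodule.starProjection_minimal]
  exact ciInf_le ⟨0, by rintro _ ⟨_, rfl⟩; exact norm_nonneg _⟩
    (⟨μ, Submodule.subset_span hμ⟩ : Submodule.span ℝ (Λ : Set H))

theorem tendsto_norm_sub_interp_of_tendsto_fillDist {ι : Type*} {l : Filter ι}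
    {Λ : ι → Finset H} {Γ : Set H} (hfill : Tendsto (fun i => fillDist (Λ i : Set H) Γ) l (𝓝 0)) :
    ∀ f ∈ closure (Submodule.span ℝ Γ : Set H),
      Tendsto (fun i => ‖f - interp (Λ i) f‖) l (𝓝 0) := by
  let T i := (Submodule.span ℝ (Λ i : Set H))ᗮ.starProjection
  have hT : Equicontinuous fun i => ⇑(T i) :=
    (LipschitzWith.uniformEquicontinuous _ 1 fun i =>
      Submodule.lipschitzWith_starProjection _).equicontinuous
  have hΓ : ∀ γ ∈ Γ, Tendsto (fun i => T i γ) l (𝓝 0) := fun γ hγ => by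
    refine tendsto_iff_edist_tendsto_0.2 (tendsto_of_tendsto_of_tendsto_of_le_of_le
      tendsto_const_nhds hfill (fun _ => zero_le) fun i => ?_)
    calc edist (T i γ) 0 = edist γ (interp (Λ i) γ) := by
          rw [edist_zero_right, edist_eq_enorm_sub, ← sub_interp_eq_starProjection_orthogonal]
      _ ≤ infEDist γ (Λ i) := edist_interp_le_infEDist _ _
      _ ≤ fillDist (Λ i) Γ := infEDist_le_fillDist hγ
  intro f hf
  simp_rw [sub_interp_eq_starProjection_orthogonal]
  exact tendsto_zero_iff_norm_tendsto_zero.1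
    (hT.tendsto_zero_of_mem_closure_span (T := fun i => (T i).toLinearMap) hΓ f hf)

end Interpolation

theorem stmt_16_general {H : Type*} [NormedAddCommGroup H] [InnerProductSpace ℝ H]
    [DecidableEq H] (Γ : Set H) (hΓ : TotallyBounded Γ)
    (g : ℕ → H) (hmem : ∀ n, g n ∈ Γ)
    (hgreedy : ∀ (n : ℕ), ∀ γ ∈ Γ,
      EMetric.infEdist γ (((Finset.range n).image g : Finset H) : Set H) ≤
        EMetric.infEdist (g n) (((Finset.range n).image g : Finset H) : Set H)) :
    Tendsto (fun n => fillDist (((Finset.range n).image g : Finset H) : Set H) Γ)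
        atTop (𝓝 0) ∧
      ∀ f ∈ closure (Submodule.span ℝ Γ : Set H),
        Tendsto (fun n => ‖f - interp ((Finset.range n).image g) f‖) atTop (𝓝 0) := by
  have hfill : Tendsto (fun n => fillDist (((Finset.range n).image g : Finset H) : Set H) Γ)
      atTop (𝓝 0) := by
    simp only [Finset.coe_image, Finset.coe_range] at hgreedy ⊢
    exact tendsto_fillDist_of_greedy hΓ hmem hgreedy
  exact ⟨hfill, tendsto_norm_sub_interp_of_tendsto_fillDist hfill⟩

/-- convergence of the geometric (`h`-)greedy algorithm on a totally bounded,
linearly independent set `Γ`. The sequence is `0`-indexed: `Λ n = {g_0, …, g_{n-1}}`, and the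
selection rule states that `g_n` has maximal distance to `Λ n` among all elements of `Γ`
(so that this distance equals the fill distance `h_{Λ n, Γ}`). Then `h_{Λ n, Γ} → 0` and
`‖f - I_{Λ n}(f)‖ → 0` for every `f` in the closed linear span of `Γ`. -/
theorem stmt_16 {H : Type*} [NormedAddCommGroup H] [InnerProductSpace ℝ H] [CompleteSpace H]
    [DecidableEq H] (Γ : Set H) (hΓ : TotallyBounded Γ)
    (hΓli : LinearIndependent (ι := Γ) ℝ Subtype.val)
    (g : ℕ → H) (hmem : ∀ n, g n ∈ Γ)
    (hgreedy : ∀ (n : ℕ), ∀ γ ∈ Γ,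
      EMetric.infEdist γ (((Finset.range n).image g : Finset H) : Set H) ≤
        EMetric.infEdist (g n) (((Finset.range n).image g : Finset H) : Set H)) :
    Tendsto (fun n => fillDist (((Finset.range n).image g : Finset H) : Set H) Γ)
        atTop (𝓝 0) ∧
      ∀ f ∈ closure (Submodule.span ℝ Γ : Set H),
        Tendsto (fun n => ‖f - interp ((Finset.range n).image g) f‖) atTop (𝓝 0) :=
  stmt_16_general Γ hΓ g hmem hgreedy
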